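/- With the hard-concrete gate m(u) = min(1, max(0, s(u)·(ζ − γ) + γ)) where s(u) = sigmoid((log(u/(1−u)) + α)/β), u uniform on (0,1), β > 0, γ < 0 < 1 < ζ, the probability that the gate is nonzero equals P(m(u) > 0) = sigmoid(α − β·log(−γ/ζ)). -/

import Mathlib

/-!
The gate is a composition of monotone maps of `u`: `m(u) > 0` exactly when the stretched
sigmoid exceeds `-γ / (ζ - γ) = sigmoid (log (-γ / ζ))`, i.e. when `u > sigmoid c` with
`c = β log (-γ / ζ) - α`, since `sigmoid (log (u / (1 - u))) = u`. The event is therefore the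
interval `(sigmoid c, 1)`, of length `1 - sigmoid c = sigmoid (-c)`.
-/

noncomputable def sigmoid (x : ℝ) : ℝ := 1 / (1 + Real.exp (-x))

theorem sigmoid_eq_real_sigmoid : sigmoid = Real.sigmoid := by
  funext x
  rw [sigmoid, Real.sigmoid_def, one_div]

theorem Real.sigmoid_log {x : ℝ} (hx : 0 < x) : Real.sigmoid (Real.log x) = x / (1 + x) := by
  rw [Real.sigmoid_def, Real.exp_neg, Real.exp_log hx]
  field_simp
  ring

theorem Real.sigmoid_log_div_one_sub {u : ℝ} (hu₀ : 0 < u) (hu₁ : u < 1) :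
    Real.sigmoid (Real.log (u / (1 - u))) = u := by
  have h : 0 < 1 - u := sub_pos.mpr hu₁
  rw [Real.sigmoid_log (div_pos hu₀ h)]
  field_simp
  ring

noncomputable def hardConcreteGate (α β γ ζ u : ℝ) : ℝ :=
  min 1 (max 0 (sigmoid ((Real.log (u / (1 - u)) + α) / β) * (ζ - γ) + γ))

theorem hardConcreteGate_pos_iff {α β γ ζ u : ℝ} (hβ : 0 < β) (hγ : γ < 0) (hζ : 0 < ζ)
    (hu₀ : 0 < u) (hu₁ : u < 1) :
    0 < hardConcreteGate α β γ ζ u ↔ Real.sigmoid (β * Real.log (-γ / ζ) - α) < u := by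
  have hζγ : 0 < ζ - γ := by linarith
  have hthreshold : -γ / (ζ - γ) = Real.sigmoid (Real.log (-γ / ζ)) := by
    have : 1 + -γ / ζ = (ζ - γ) / ζ := by field_simp; ring
    rw [Real.sigmoid_log (div_pos (neg_pos.mpr hγ) hζ), this, div_div_div_cancel_right₀ hζ.ne']
  calc 0 < hardConcreteGate α β γ ζ u
      ↔ 0 < Real.sigmoid ((Real.log (u / (1 - u)) + α) / β) * (ζ - γ) + γ := by
        simp [hardConcreteGate, sigmoid_eq_real_sigmoid]
    _ ↔ -γ / (ζ - γ) < Real.sigmoid ((Real.log (u / (1 - u)) + α) / β) := by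
        rw [div_lt_iff₀ hζγ]
        constructor <;> intro h <;> linarith
    _ ↔ Real.log (-γ / ζ) < (Real.log (u / (1 - u)) + α) / β := by
        rw [hthreshold, Real.sigmoid_lt_iff]
    _ ↔ β * Real.log (-γ / ζ) - α < Real.log (u / (1 - u)) := by
        rw [lt_div_iff₀ hβ]
        constructor <;> intro h <;> linarith
    _ ↔ Real.sigmoid (β * Real.log (-γ / ζ) - α) < u := by
        rw [← Real.sigmoid_lt_iff, Real.sigmoid_log_div_one_sub hu₀ hu₁]

theorem stmt_9 (α β γ ζ : ℝ) (hβ : 0 < β) (hγ : γ < 0) (hζ : 1 < ζ) :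
    MeasureTheory.volume
        {u : ℝ | u ∈ Set.Ioo (0 : ℝ) 1 ∧
          0 < min 1 (max 0 (sigmoid ((Real.log (u / (1 - u)) + α) / β) * (ζ - γ) + γ))}
      = ENNReal.ofReal (sigmoid (α - β * Real.log (-γ / ζ))) := by
  set c := β * Real.log (-γ / ζ) - α
  have hset : {u : ℝ | u ∈ Set.Ioo (0 : ℝ) 1 ∧ 0 < hardConcreteGate α β γ ζ u}
      = Set.Ioo (Real.sigmoid c) 1 := by
    ext u
    simp only [Set.mem_ofPred_eq, Set.mem_Ioo]
    constructor
    · rintro ⟨⟨hu₀, hu₁⟩, hpos⟩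
      exact ⟨(hardConcreteGate_pos_iff hβ hγ (by linarith) hu₀ hu₁).mp hpos, hu₁⟩
    · rintro ⟨hcu, hu₁⟩
      have hu₀ : 0 < u := (Real.sigmoid_pos c).trans hcu
      exact ⟨⟨hu₀, hu₁⟩, (hardConcreteGate_pos_iff hβ hγ (by linarith) hu₀ hu₁).mpr hcu⟩
  change MeasureTheory.volume {u : ℝ | u ∈ Set.Ioo (0 : ℝ) 1 ∧ 0 < hardConcreteGate α β γ ζ u} = _
  rw [hset, Real.volume_Ioo, ← Real.sigmoid_neg, neg_sub, sigmoid_eq_real_sigmoid]
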